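/- Define sequences (s_i) and (p_i) by s_1 = p_1 = 1, s_{i+1} = (p_i + 1)·s_i + p_i², and p_{i+1} = 2·p_i². Then s_k + p_k = Θ(2^(2^(k-1))); concretely, for all k ≥ 1, 2^(2^(k-1) - 1) ≤ s_k + p_k ≤ 2^(2^(k-1) + 1). -/
import Mathlib


/-- Sequences `s`, `p` as in the Burling construction satisfy
`2 ^ (2 ^ (k - 1) - 1) ≤ s k + p k ≤ 2 ^ (2 ^ (k - 1) + 1)` for all `k ≥ 1`,
i.e. `s k + p k = Θ(2 ^ (2 ^ (k - 1)))`. -/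
theorem burling_size_theta (s p : ℕ → ℕ)
    (hs1 : s 1 = 1) (hp1 : p 1 = 1)
    (hs : ∀ i, 1 ≤ i → s (i + 1) = (p i + 1) * s i + p i ^ 2)
    (hp : ∀ i, 1 ≤ i → p (i + 1) = 2 * p i ^ 2) :
    ∀ k, 1 ≤ k →
      2 ^ (2 ^ (k - 1) - 1) ≤ s k + p k ∧ s k + p k ≤ 2 ^ (2 ^ (k - 1) + 1) := by
  -- closed form for p
  have hpf : ∀ k, 1 ≤ k → p k = 2 ^ (2 ^ (k - 1) - 1) := by
    intro k hk
    induction k, hk using Nat.le_induction with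
    | base => simpa using hp1
    | succ n hn ih =>
      have h1 : (1:ℕ) ≤ 2 ^ (n - 1) := Nat.one_le_two_pow
      have hexp : 2 ^ ((n+1) - 1) - 1 = 2 * (2 ^ (n - 1) - 1) + 1 := by
        have : 2 ^ n = 2 * 2 ^ (n - 1) := by
          rw [← pow_succ']
          congr 1
          omega
        simp only [Nat.add_sub_cancel, this]
        omega
      rw [hp n hn, ih, hexp, ← pow_mul, Nat.mul_comm (2 ^ (n - 1) - 1) 2, pow_succ]
      ring
  -- bound s
  have hsb : ∀ k, 1 ≤ k → s k ≤ 3 * p k := by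
    intro k hk
    induction k, hk using Nat.le_induction with
    | base => rw [hs1, hp1]; norm_num
    | succ n hn ih =>
      rcases eq_or_lt_of_le hn with h1 | h2
      · have : n = 1 := h1.symm
        subst this
        rw [hs 1 le_rfl, hp 1 le_rfl, hs1, hp1]
        norm_num
      · have hn2 : 2 ≤ n := h2
        have hpge : 2 ≤ p n := by
          rw [hpf n hn]
          have : 1 ≤ 2 ^ (n - 1) - 1 := by
            have : 2 ≤ 2 ^ (n - 1) := by
              calc 2 = 2 ^ 1 := rfl
              _ ≤ 2 ^ (n - 1) := Nat.pow_le_pow_right (by norm_num) (by omega)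
            omega
          calc 2 = 2 ^ 1 := rfl
          _ ≤ 2 ^ (2 ^ (n-1) - 1) := Nat.pow_le_pow_right (by norm_num) this
        rw [hs n hn, hp n hn]
        nlinarith [ih, hpge, sq_nonneg (p n)]
  intro k hk
  have hp' := hpf k hk
  constructor
  · calc 2 ^ (2 ^ (k - 1) - 1) = p k := hp'.symm
    _ ≤ s k + p k := Nat.le_add_left _ _
  · have h1 : (1:ℕ) ≤ 2 ^ (k - 1) := Nat.one_le_two_pow
    have : s k + p k ≤ 4 * p k := by
      have := hsb k hk; omega
    calc s k + p k ≤ 4 * p k := this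
    _ = 2 ^ (2 ^ (k - 1) + 1) := by
        rw [hp']
        have : 2 ^ (k-1) + 1 = (2 ^ (k-1) - 1) + 2 := by omega
        rw [this, pow_add]
        ring
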